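/- Let n ≥ 34, let e₁,…,eₙ be the canonical basis of ℝⁿ, let b = (1/√6, 1/√6, 1/√6, 1/√6, 1/√6, 1/√6, 0, …, 0) ∈ ℝⁿ, and set aⱼ = b for 1 ≤ j ≤ 6 and aⱼ = eⱼ for 6 < j ≤ n. Then for z = a₁+⋯+aₙ = 6b + Σ_{j=7}^{n} eⱼ one has ‖z‖² = n+30 and ∏_{j=1}^{n} ⟨z/‖z‖, aⱼ⟩ = 6⁶/(n+30)^{n/2}, and moreover 6⁶/(n+30)^{n/2} < n^{−n/2}. -/

import Mathlib

open scoped RealInnerProductSpace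

private lemma stmt11_key (n : ℕ) (hn : 34 ≤ n) : (6:ℝ)^12 * (n:ℝ)^n < ((n:ℝ)+30)^n := by
  induction n, hn using Nat.le_induction with
  | base => norm_num
  | succ n hn IH =>
    have hN : (34:ℝ) ≤ n := by exact_mod_cast hn
    set N : ℝ := (n:ℝ) with hNdef
    have hA : (0:ℝ) < (N+30)*(N+1) := by nlinarith
    have hber : 1 + (n:ℕ) * (-30/((N+30)*(N+1))) ≤ (1 + (-30/((N+30)*(N+1))))^n := by
      apply one_add_mul_le_pow
      rw [neg_div, le_neg]
      rw [div_le_iff₀ hA]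
      nlinarith
    have heq1 : 1 + (-30/((N+30)*(N+1))) = ((N+31)*N)/((N+30)*(N+1)) := by
      field_simp; ring
    have hstep : (N+1)/(N+31) ≤ (((N+31)*N)/((N+30)*(N+1)))^n := by
      rw [← heq1]
      refine le_trans ?_ hber
      rw [← hNdef] at *
      rw [div_le_iff₀ (by nlinarith : (0:ℝ) < N+31), neg_div, mul_neg, ← sub_eq_add_neg,
        sub_mul, one_mul]
      have h30 : N*(30/((N+30)*(N+1)))*(N+31) ≤ 30 := by
        rw [show N*(30/((N+30)*(N+1)))*(N+31) = 30*N*(N+31)/((N+30)*(N+1)) from by ring,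
          div_le_iff₀ hA]
        nlinarith
      linarith
    have h31 : (0:ℝ) < N + 31 := by nlinarith
    have hApow : (0:ℝ) < ((N+30)*(N+1))^n := pow_pos hA n
    rw [div_pow, div_le_div_iff₀ h31 hApow] at hstep
    have IH' := mul_lt_mul_of_pos_right IH (pow_pos (by nlinarith : (0:ℝ) < N+1) (n+1))
    have hNpos : (0:ℝ) < N^n := pow_pos (by nlinarith) n
    push_cast
    refine lt_of_mul_lt_mul_right ?_ (le_of_lt hNpos)
    calc 6^12 * (N+1)^(n+1) * N^n = 6^12 * N^n * (N+1)^(n+1) := by ring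
      _ < (N+30)^n * (N+1)^(n+1) := IH'
      _ = (N+1) * ((N+30)*(N+1))^n := by rw [mul_pow]; ring
      _ ≤ ((N+31)*N)^n * (N+31) := hstep
      _ = (N+1+30)^(n+1) * N^n := by rw [mul_pow]; ring

private lemma stmt11_key2 (n : ℕ) (hn : 34 ≤ n) :
    6 ^ 6 / ((n : ℝ) + 30) ^ ((n : ℝ) / 2) < (n : ℝ) ^ (-(n : ℝ) / 2) := by
  have hN : (34:ℝ) ≤ n := by exact_mod_cast hn
  have hn0 : (0:ℝ) < n := by linarith
  have hx : (0:ℝ) < (n:ℝ) + 30 := by linarith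
  have hxp : (0:ℝ) < ((n:ℝ)+30) ^ ((n:ℝ)/2) := Real.rpow_pos_of_pos hx _
  have hyp : (0:ℝ) < (n:ℝ) ^ ((n:ℝ)/2) := Real.rpow_pos_of_pos hn0 _
  rw [show -(n:ℝ)/2 = -((n:ℝ)/2) from by ring, Real.rpow_neg hn0.le,
    div_lt_iff₀ hxp, inv_mul_eq_div, lt_div_iff₀ hyp]
  have hsq : ((6:ℝ)^6 * (n:ℝ)^((n:ℝ)/2))^2 < (((n:ℝ)+30)^((n:ℝ)/2))^2 := by
    have e1 : ((6:ℝ)^6 * (n:ℝ)^((n:ℝ)/2))^2 = 6^12 * (n:ℝ)^(n:ℕ) := by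
      rw [mul_pow, ← Real.rpow_natCast ((n:ℝ)^((n:ℝ)/2)) 2, ← Real.rpow_mul hn0.le,
        ← Real.rpow_natCast (n:ℝ) n]
      norm_num
    have e2 : (((n:ℝ)+30)^((n:ℝ)/2))^2 = ((n:ℝ)+30)^(n:ℕ) := by
      rw [← Real.rpow_natCast (((n:ℝ)+30)^((n:ℝ)/2)) 2, ← Real.rpow_mul hx.le,
        ← Real.rpow_natCast ((n:ℝ)+30) n]
      norm_num
    rw [e1, e2]
    exact stmt11_key n hn
  exact (pow_lt_pow_iff_left₀ (by positivity) hxp.le two_ne_zero).mp hsq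

/-- The concrete example: for `n ≥ 34`, with `b = (1/√6,…,1/√6,0,…,0)` (six nonzero
coordinates), `aⱼ = b` for `j ≤ 6` and `aⱼ = eⱼ` for `j > 6`, the vector
`z = a₁+⋯+aₙ = 6b + Σ_{j>6} eⱼ` satisfies `‖z‖² = n+30`,
`∏ⱼ ⟨z/‖z‖, aⱼ⟩ = 6⁶/(n+30)^(n/2)`, and `6⁶/(n+30)^(n/2) < n^(-n/2)`. -/
theorem stmt11 (n : ℕ) (hn : 34 ≤ n)
    (b : EuclideanSpace ℝ (Fin n))
    (hb : ∀ i : Fin n, b i = if (i : ℕ) < 6 then (Real.sqrt 6)⁻¹ else 0)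
    (a : Fin n → EuclideanSpace ℝ (Fin n))
    (ha : ∀ j : Fin n, a j = if (j : ℕ) < 6 then b else EuclideanSpace.single j 1) :
    ‖∑ j, a j‖ ^ 2 = (n : ℝ) + 30 ∧
    ∏ j, ⟪(‖∑ i, a i‖⁻¹ • ∑ i, a i : EuclideanSpace ℝ (Fin n)), a j⟫ =
      6 ^ 6 / ((n : ℝ) + 30) ^ ((n : ℝ) / 2) ∧
    6 ^ 6 / ((n : ℝ) + 30) ^ ((n : ℝ) / 2) < (n : ℝ) ^ (-(n : ℝ) / 2) := by
  have h6n : 6 ≤ n := by omega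
  set z := ∑ j, a j with hzdef
  have hs6 : Real.sqrt 6 ≠ 0 := by positivity
  have hx : (0:ℝ) < (n:ℝ) + 30 := by positivity
  have hmul6 : Real.sqrt 6 * Real.sqrt 6 = 6 := Real.mul_self_sqrt (by norm_num)
  -- coordinates of z
  have hz : ∀ i : Fin n, z i = if (i : ℕ) < 6 then Real.sqrt 6 else 1 := by
    intro i
    rw [hzdef, WithLp.ofLp_sum, Finset.sum_apply i Finset.univ fun j => a j]
    have hterm : ∀ j : Fin n, a j i =
        (fun k : ℕ => if k < 6 then b i else if (i:ℕ) = k then 1 else 0) (j:ℕ) := by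
      intro j
      rw [ha j]
      by_cases hj : (j:ℕ) < 6
      · simp [hj]
      · simp only [hj, if_false, EuclideanSpace.single_apply, Fin.ext_iff]
    rw [Finset.sum_congr rfl fun j _ => hterm j,
      Fin.sum_univ_eq_sum_range (fun k : ℕ => if k < 6 then b i else if (i:ℕ) = k then (1:ℝ) else 0) n,
      Finset.range_eq_Ico, ← Finset.sum_Ico_consecutive _ (Nat.zero_le 6) h6n]
    have h1 : ∑ k ∈ Finset.Ico 0 6,
        (if k < 6 then b i else if (i:ℕ) = k then (1:ℝ) else 0) = 6 * b i := by
      rw [Finset.sum_congr rfl fun k hk => if_pos (Finset.mem_Ico.mp hk).2,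
        Finset.sum_const, Nat.card_Ico]
      simp [mul_comm]
    have h2 : ∑ k ∈ Finset.Ico 6 n,
        (if k < 6 then b i else if (i:ℕ) = k then (1:ℝ) else 0)
        = if (i:ℕ) ∈ Finset.Ico 6 n then 1 else 0 := by
      rw [Finset.sum_congr rfl fun k hk => if_neg (Nat.not_lt.mpr (Finset.mem_Ico.mp hk).1)]
      exact Finset.sum_ite_eq _ _ _
    rw [h1, h2, hb i]
    by_cases hi : (i:ℕ) < 6
    · rw [if_pos hi, if_pos hi, if_neg (by simp [Finset.mem_Ico]; omega)]
      field_simp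
      simp [sq, hmul6]
    · rw [if_neg hi, if_neg hi, if_pos (by simp [Finset.mem_Ico]; omega)]
      ring
  -- the norm
  have hnorm : ‖z‖ ^ 2 = (n : ℝ) + 30 := by
    rw [← real_inner_self_eq_norm_sq, PiLp.inner_apply]
    simp only [RCLike.inner_apply, conj_trivial]
    have hterm : ∀ i : Fin n, z i * z i = (fun k : ℕ => if k < 6 then (6:ℝ) else 1) (i:ℕ) := by
      intro i
      rw [hz i]
      by_cases hi : (i:ℕ) < 6 <;> simp [hi, hmul6]
    rw [Finset.sum_congr rfl fun i _ => hterm i,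
      Fin.sum_univ_eq_sum_range (fun k : ℕ => if k < 6 then (6:ℝ) else 1) n,
      Finset.range_eq_Ico, ← Finset.sum_Ico_consecutive _ (Nat.zero_le 6) h6n,
      Finset.sum_congr rfl fun k hk => if_pos (Finset.mem_Ico.mp hk).2,
      Finset.sum_congr rfl fun k hk => if_neg (Nat.not_lt.mpr (Finset.mem_Ico.mp hk).1),
      Finset.sum_const, Finset.sum_const, Nat.card_Ico, Nat.card_Ico]
    simp only [nsmul_eq_mul, mul_one]
    push_cast [Nat.cast_sub h6n]
    ring
  refine ⟨hnorm, ?_, stmt11_key2 n hn⟩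
  -- the product
  have hdot : ∀ x y : EuclideanSpace ℝ (Fin n), ⟪x, y⟫ = ∑ i, x i * y i := by
    intro x y; rw [PiLp.inner_apply]; simp [RCLike.inner_apply]
    exact Finset.sum_congr rfl fun _ _ => mul_comm _ _
  have hzb : ⟪z, b⟫ = 6 := by
    rw [hdot]
    have hterm : ∀ i : Fin n, z i * b i = (fun k : ℕ => if k < 6 then (1:ℝ) else 0) (i:ℕ) := by
      intro i; rw [hz i, hb i]
      by_cases hi : (i:ℕ) < 6 <;> simp [hi, Real.sqrt_eq_zero', hs6]
    rw [Finset.sum_congr rfl fun i _ => hterm i,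
      Fin.sum_univ_eq_sum_range (fun k : ℕ => if k < 6 then (1:ℝ) else 0) n,
      Finset.range_eq_Ico, ← Finset.sum_Ico_consecutive _ (Nat.zero_le 6) h6n,
      Finset.sum_congr rfl fun k hk => if_pos (Finset.mem_Ico.mp hk).2,
      Finset.sum_congr rfl fun k hk => if_neg (Nat.not_lt.mpr (Finset.mem_Ico.mp hk).1),
      Finset.sum_const, Finset.sum_const, Nat.card_Ico]
    norm_num
  have hinner : ∀ j : Fin n, ⟪z, a j⟫ = (fun k : ℕ => if k < 6 then (6:ℝ) else 1) (j:ℕ) := by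
    intro j
    rw [ha j]
    by_cases hj : (j:ℕ) < 6
    · simpa [hj] using hzb
    · rw [if_neg hj, hdot]
      simp only [EuclideanSpace.single_apply, mul_ite, mul_one, mul_zero]
      rw [Finset.sum_ite_eq' Finset.univ j z, if_pos (Finset.mem_univ j), hz j, if_neg hj]
      simp [hj]
  have hnormval : ‖z‖ = Real.sqrt ((n:ℝ) + 30) := by
    rw [← Real.sqrt_sq (norm_nonneg z), hnorm]
  calc ∏ j, ⟪(‖z‖⁻¹ • z : EuclideanSpace ℝ (Fin n)), a j⟫
      = ∏ j : Fin n, ‖z‖⁻¹ * ((fun k : ℕ => if k < 6 then (6:ℝ) else 1) (j:ℕ)) := by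
        refine Finset.prod_congr rfl fun j _ => ?_
        rw [real_inner_smul_left, hinner j]
    _ = (‖z‖⁻¹) ^ n * ∏ j : Fin n, ((fun k : ℕ => if k < 6 then (6:ℝ) else 1) (j:ℕ)) := by
        rw [Finset.prod_mul_distrib, Finset.prod_const, Finset.card_univ, Fintype.card_fin]
    _ = (‖z‖⁻¹) ^ n * 6 ^ 6 := by
        rw [Fin.prod_univ_eq_prod_range (fun k : ℕ => if k < 6 then (6:ℝ) else 1) n,
          Finset.range_eq_Ico, ← Finset.prod_Ico_consecutive _ (Nat.zero_le 6) h6n,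
          Finset.prod_congr rfl fun k hk => if_pos (Finset.mem_Ico.mp hk).2,
          Finset.prod_congr rfl fun k hk => if_neg (Nat.not_lt.mpr (Finset.mem_Ico.mp hk).1),
          Finset.prod_const, Finset.prod_const, Nat.card_Ico]
        norm_num
    _ = 6 ^ 6 / ((n : ℝ) + 30) ^ ((n : ℝ) / 2) := by
        rw [hnormval, Real.sqrt_eq_rpow, inv_pow,
          ← Real.rpow_natCast (((n:ℝ)+30) ^ ((1:ℝ)/2)) n, ← Real.rpow_mul hx.le]
        rw [show (1:ℝ)/2 * (n:ℕ) = (n:ℝ)/2 from by push_cast; ring]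
        ring
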